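/- Chain rule: Let f : ℍ → ℍ be H-differentiable at z⁰ ∈ ℍ with H-derivative d, set w⁰ = f(z⁰), and let F : ℍ → ℍ be H-differentiable at w⁰ via witness sequences A, B : ℕ → ℍ (i.e. ∑_k ‖A k‖ · ‖B k‖ < ∞ and F(w⁰ + k) − F(w⁰) = ∑_j (A j) · k · (B j) + ω(k) with ‖ω(k)‖/‖k‖ → 0 as k → 0). Then the composite z ↦ F(f(z)) is H-differentiable at z⁰ with H-derivative ∑_j (A j) · d · (B j). -/

import Mathlib

open scoped Quaternion
open Filter Topology

/-- A function `f : ℍ → ℍ` is H-differentiable at `z₀` with H-derivative `d` if there exist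
sequences of quaternions `A, B` with `∑ ‖A k‖ * ‖B k‖ < ∞` such that
`f (z₀ + h) - f z₀ = ∑' k, A k * h * B k + ω h` with `‖ω h‖ / ‖h‖ → 0` as `h → 0`,
and `d = ∑' k, A k * B k`. -/
def HDiffAt (f : ℍ[ℝ] → ℍ[ℝ]) (z₀ d : ℍ[ℝ]) : Prop :=
  ∃ A B : ℕ → ℍ[ℝ],
    (Summable fun k => ‖A k‖ * ‖B k‖) ∧
    Filter.Tendsto
      (fun h : ℍ[ℝ] => ‖f (z₀ + h) - f z₀ - ∑' k, A k * h * B k‖ / ‖h‖)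
      (𝓝[≠] (0 : ℍ[ℝ])) (𝓝 0) ∧
    d = ∑' k, A k * B k

/-! The witnesses `A, B` of H-differentiability say precisely that `f` has as Fréchet derivative
the sandwich operator `h ↦ ∑ A k * h * B k`, a series converging absolutely in operator norm, and
the H-derivative is this operator evaluated at `1`. The Fréchet chain rule then applies, and the
composite of two sandwich operators is again one, with coefficients `A j * A' i` and `B' i * B j`
indexed by `ℕ × ℕ`, which an enumeration `ℕ ≃ ℕ × ℕ` turns back into sequences. -/

open ContinuousLinearMap

theorem hasFDerivAt_iff_tendsto_norm_div_norm {𝕜 E F : Type*} [NontriviallyNormedField 𝕜]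
    [NormedAddCommGroup E] [NormedSpace 𝕜 E] [NormedAddCommGroup F] [NormedSpace 𝕜 F]
    {f : E → F} {f' : E →L[𝕜] F} {x : E} :
    HasFDerivAt f f' x ↔
      Tendsto (fun h => ‖f (x + h) - f x - f' h‖ / ‖h‖) (𝓝[≠] 0) (𝓝 0) := by
  rw [hasFDerivAt_iff_isLittleO_nhds_zero, ← Asymptotics.isLittleO_norm_norm,
    Asymptotics.isLittleO_iff_tendsto fun h hh => by simp [norm_eq_zero.1 hh],
    ← nhdsNE_sup_pure, tendsto_sup, and_iff_left]
  simpa using tendsto_pure_nhds (fun h : E => ‖f (x + h) - f x - f' h‖ / ‖h‖) 0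

section Sandwich

variable (𝕜 : Type*) {R ι ι' : Type*} [NontriviallyNormedField 𝕜] [NormedRing R]
  [NormedAlgebra 𝕜 R]

noncomputable def sandwichSum (A B : ι → R) : R →L[𝕜] R :=
  ∑' k, mulLeftRight 𝕜 R (A k) (B k)

variable {𝕜} {A B : ι → R} {A' B' : ι' → R}

theorem sandwichSum_comp_equiv (e : ι' ≃ ι) :
    sandwichSum 𝕜 (A ∘ e) (B ∘ e) = sandwichSum 𝕜 A B :=
  e.tsum_eq fun k => mulLeftRight 𝕜 R (A k) (B k)

theorem summable_norm_mul_norm_prod (hAB : Summable fun k => ‖A k‖ * ‖B k‖)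
    (hA'B' : Summable fun i => ‖A' i‖ * ‖B' i‖) :
    Summable fun p : ι × ι' => ‖A p.1 * A' p.2‖ * ‖B' p.2 * B p.1‖ := by
  refine (hAB.mul_of_nonneg hA'B' (fun _ => by positivity) fun _ => by positivity).of_nonneg_of_le
    (fun _ => by positivity) fun p => ?_
  calc ‖A p.1 * A' p.2‖ * ‖B' p.2 * B p.1‖
      ≤ (‖A p.1‖ * ‖A' p.2‖) * (‖B' p.2‖ * ‖B p.1‖) := by gcongr <;> exact norm_mul_le _ _
    _ = ‖A p.1‖ * ‖B p.1‖ * (‖A' p.2‖ * ‖B' p.2‖) := by ring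

variable [CompleteSpace R]

theorem summable_mul_mul (hAB : Summable fun k => ‖A k‖ * ‖B k‖) (x : R) :
    Summable fun k => A k * x * B k :=
  (hAB.mul_right ‖x‖).of_norm_bounded fun k => calc
    ‖A k * x * B k‖ ≤ ‖A k‖ * ‖x‖ * ‖B k‖ := norm_mul₃_le
    _ = ‖A k‖ * ‖B k‖ * ‖x‖ := by ring

theorem summable_mulLeftRight (hAB : Summable fun k => ‖A k‖ * ‖B k‖) :
    Summable fun k => mulLeftRight 𝕜 R (A k) (B k) :=
  hAB.of_norm_bounded fun k => opNorm_mulLeftRight_apply_apply_le 𝕜 R (A k) (B k)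

theorem sandwichSum_apply (hAB : Summable fun k => ‖A k‖ * ‖B k‖) (x : R) :
    sandwichSum 𝕜 A B x = ∑' k, A k * x * B k :=
  ((summable_mulLeftRight hAB).hasSum.mapL (apply 𝕜 R x)).tsum_eq.symm

theorem sandwichSum_comp_sandwichSum (hAB : Summable fun k => ‖A k‖ * ‖B k‖)
    (hA'B' : Summable fun i => ‖A' i‖ * ‖B' i‖) :
    (sandwichSum 𝕜 A B).comp (sandwichSum 𝕜 A' B') =
      sandwichSum 𝕜 (fun p : ι × ι' => A p.1 * A' p.2) (fun p => B' p.2 * B p.1) := by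
  ext x
  have hprod := summable_norm_mul_norm_prod hAB hA'B'
  rw [comp_apply, sandwichSum_apply hAB, sandwichSum_apply hA'B', sandwichSum_apply hprod,
    (summable_mul_mul hprod x).tsum_prod]
  refine tsum_congr fun j => ?_
  rw [← (summable_mul_mul hA'B' x).tsum_mul_left,
    ← ((summable_mul_mul hA'B' x).mul_left (A j)).tsum_mul_right]
  simp only [mul_assoc]

theorem hasFDerivAt_sandwichSum_iff (hAB : Summable fun k => ‖A k‖ * ‖B k‖) {f : R → R} {z : R} :
    HasFDerivAt f (sandwichSum 𝕜 A B) z ↔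
      Tendsto (fun h => ‖f (z + h) - f z - ∑' k, A k * h * B k‖ / ‖h‖) (𝓝[≠] 0) (𝓝 0) := by
  simp only [hasFDerivAt_iff_tendsto_norm_div_norm, sandwichSum_apply hAB]

theorem exists_sandwichSum_eq_comp {A B A' B' : ℕ → R}
    (hAB : Summable fun k => ‖A k‖ * ‖B k‖) (hA'B' : Summable fun i => ‖A' i‖ * ‖B' i‖) :
    ∃ A'' B'' : ℕ → R, (Summable fun n => ‖A'' n‖ * ‖B'' n‖) ∧
      (sandwichSum 𝕜 A B).comp (sandwichSum 𝕜 A' B') = sandwichSum 𝕜 A'' B'' := by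
  obtain ⟨e⟩ : Nonempty (ℕ ≃ ℕ × ℕ) := ⟨(Denumerable.eqv (ℕ × ℕ)).symm⟩
  refine ⟨(fun p => A p.1 * A' p.2) ∘ e, (fun p => B' p.2 * B p.1) ∘ e, ?_, ?_⟩
  · exact e.summable_iff.2 (summable_norm_mul_norm_prod hAB hA'B')
  · rw [sandwichSum_comp_equiv, sandwichSum_comp_sandwichSum hAB hA'B']

end Sandwich

theorem hDiffAt_iff {f : ℍ[ℝ] → ℍ[ℝ]} {z₀ d : ℍ[ℝ]} :
    HDiffAt f z₀ d ↔ ∃ A B : ℕ → ℍ[ℝ], (Summable fun k => ‖A k‖ * ‖B k‖) ∧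
      HasFDerivAt f (sandwichSum ℝ A B) z₀ ∧ d = sandwichSum ℝ A B 1 := by
  refine exists₂_congr fun A B => and_congr_right fun hAB => ?_
  rw [hasFDerivAt_sandwichSum_iff hAB, sandwichSum_apply hAB]
  simp only [mul_one]

/-- Chain rule for H-derivatives: if `F` is H-differentiable at `w⁰ = f z⁰` with witness
sequences `A, B`, and `f` is H-differentiable at `z⁰` with H-derivative `d`, then `F ∘ f`
is H-differentiable at `z⁰` with H-derivative `∑' j, A j * d * B j`. -/
theorem hDiffAt_comp (f F : ℍ[ℝ] → ℍ[ℝ]) (z₀ d : ℍ[ℝ]) (A B : ℕ → ℍ[ℝ])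
    (hf : HDiffAt f z₀ d)
    (hAB : Summable fun j => ‖A j‖ * ‖B j‖)
    (hF : Filter.Tendsto
      (fun k : ℍ[ℝ] => ‖F (f z₀ + k) - F (f z₀) - ∑' j, A j * k * B j‖ / ‖k‖)
      (𝓝[≠] (0 : ℍ[ℝ])) (𝓝 0)) :
    HDiffAt (fun z => F (f z)) z₀ (∑' j, A j * d * B j) := by
  obtain ⟨A', B', hA'B', hf', rfl⟩ := hDiffAt_iff.1 hf
  obtain ⟨A'', B'', hA''B'', hcomp⟩ := exists_sandwichSum_eq_comp (𝕜 := ℝ) hAB hA'B'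
  refine hDiffAt_iff.2 ⟨A'', B'', hA''B'', ?_, ?_⟩
  · rw [← hcomp]
    exact ((hasFDerivAt_sandwichSum_iff hAB).2 hF).comp z₀ hf'
  · rw [← hcomp, comp_apply, sandwichSum_apply hAB]
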